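/- arXiv:2410.10347 — 7 statements merged into one kernel-verified Lean document; each statement's English description precedes it below -/
import Mathlib

section
/- (Lemma A.2, pointwise cost monotonicity in λ.) Fix an integer k ≥ 1 and vectors q, c : Fin k → ℝ. Let λ₁ < λ₂ be real numbers and let p¹, p² : Fin k → ℝ be probability vectors such that p¹ i > 0 implies q i − λ₁·c i = max_j (q j − λ₁·c j), and p² i > 0 implies q i − λ₂·c i = max_j (q j − λ₂·c j). Then ∑_i p¹ i · c i ≥ ∑_i p² i · c i. -/
open Finset

/-- The maximum of a function over `Fin k`, given `0 < k`. -/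
noncomputable def finMax {k : ℕ} (hk : 0 < k) (f : Fin k → ℝ) : ℝ :=
  Finset.univ.sup' (Finset.univ_nonempty_iff.mpr ⟨⟨0, hk⟩⟩) f

lemma finMax_le_of {k : ℕ} (hk : 0 < k) (f : Fin k → ℝ) (i : Fin k) :
    f i ≤ finMax hk f :=
  Finset.le_sup' f (Finset.mem_univ i)

lemma expected_eq_max {k : ℕ} (hk : 0 < k) (f : Fin k → ℝ) (p : Fin k → ℝ)
    (hp0 : ∀ i, 0 ≤ p i) (hp1 : ∑ i, p i = 1)
    (hopt : ∀ i, 0 < p i → f i = finMax hk f) :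
    ∑ i, p i * f i = finMax hk f := by
  have : ∀ i ∈ Finset.univ, p i * f i = p i * finMax hk f := by
    intro i _
    rcases lt_or_eq_of_le (hp0 i) with h | h
    · rw [hopt i h]
    · rw [← h]; ring
  rw [Finset.sum_congr rfl this, ← Finset.sum_mul, hp1, one_mul]

lemma expected_le_max {k : ℕ} (hk : 0 < k) (f : Fin k → ℝ) (p : Fin k → ℝ)
    (hp0 : ∀ i, 0 ≤ p i) (hp1 : ∑ i, p i = 1) :
    ∑ i, p i * f i ≤ finMax hk f := by
  calc ∑ i, p i * f i ≤ ∑ i, p i * finMax hk f :=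
        Finset.sum_le_sum fun i _ =>
          mul_le_mul_of_nonneg_left (finMax_le_of hk f i) (hp0 i)
    _ = finMax hk f := by rw [← Finset.sum_mul, hp1, one_mul]

/-- Lemma A.2, pointwise version: if `p¹` is a probability vector optimal at level `λ₁`
and `p²` is one optimal at level `λ₂` with `λ₁ < λ₂`, then the expected cost under `p¹`
is at least the expected cost under `p²`. -/
theorem cost_monotone_pointwise (k : ℕ) (hk : 0 < k) (q c : Fin k → ℝ)
    (lam₁ lam₂ : ℝ) (hlt : lam₁ < lam₂)
    (p₁ p₂ : Fin k → ℝ)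
    (hp₁0 : ∀ i, 0 ≤ p₁ i) (hp₁1 : ∑ i, p₁ i = 1)
    (hp₂0 : ∀ i, 0 ≤ p₂ i) (hp₂1 : ∑ i, p₂ i = 1)
    (hopt₁ : ∀ i, 0 < p₁ i →
      q i - lam₁ * c i = finMax hk (fun j => q j - lam₁ * c j))
    (hopt₂ : ∀ i, 0 < p₂ i →
      q i - lam₂ * c i = finMax hk (fun j => q j - lam₂ * c j)) :
    ∑ i, p₂ i * c i ≤ ∑ i, p₁ i * c i := by
  set f₁ : Fin k → ℝ := fun j => q j - lam₁ * c j with hf₁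
  set f₂ : Fin k → ℝ := fun j => q j - lam₂ * c j with hf₂
  have h1 : ∑ i, p₂ i * f₁ i ≤ ∑ i, p₁ i * f₁ i := by
    rw [expected_eq_max hk f₁ p₁ hp₁0 hp₁1 hopt₁]
    exact expected_le_max hk f₁ p₂ hp₂0 hp₂1
  have h2 : ∑ i, p₁ i * f₂ i ≤ ∑ i, p₂ i * f₂ i := by
    rw [expected_eq_max hk f₂ p₂ hp₂0 hp₂1 hopt₂]
    exact expected_le_max hk f₂ p₁ hp₁0 hp₁1
  have e : ∀ (p : Fin k → ℝ) (lam : ℝ),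
      ∑ i, p i * (q i - lam * c i) = ∑ i, p i * q i - lam * ∑ i, p i * c i := by
    intro p lam
    rw [Finset.mul_sum, ← Finset.sum_sub_distrib]
    exact Finset.sum_congr rfl fun i _ => by ring
  simp only [hf₁, hf₂, e] at h1 h2
  nlinarith [h1, h2, sub_pos.mpr hlt]
end

section
/- (Lemma A.2, expected cost monotonicity.) Let X be a measurable space with probability measure μ, k ≥ 1, and q̂, ĉ : X → (Fin k → ℝ) measurable. For λ ∈ ℝ let S_λ be the set of routing strategies s (s x i ≥ 0, ∑_i s x i = 1 for all x) putting zero mass on any model i with q̂ x i − λ·ĉ x i < max_j (q̂ x j − λ·ĉ x j). If λ₁ < λ₂, s¹ ∈ S_λ₁ and s² ∈ S_λ₂, and the functions x ↦ ∑_i s¹ x i · ĉ x i and x ↦ ∑_i s² x i · ĉ x i are integrable with respect to μ, then ∫ (∑_i s¹ x i · ĉ x i) dμ ≥ ∫ (∑_i s² x i · ĉ x i) dμ. In fact the inequality ∑_i s¹ x i · ĉ x i ≥ ∑_i s² x i · ĉ x i holds for every x ∈ X. -/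
open Finset MeasureTheory

/-- `s` is a routing strategy: for every query `x`, `s x` is a probability
distribution over the `k` models. -/
def IsRoutingStrategy {X : Type*} {k : ℕ} (s : X → Fin k → ℝ) : Prop :=
  ∀ x, (∀ i, 0 ≤ s x i) ∧ ∑ i, s x i = 1

/-- The set `S_λ` of routing strategies that, for each query, only put mass on models
attaining the maximal cost-quality tradeoff `q̂ x i - λ * ĉ x i`. -/
def Sset {X : Type*} {k : ℕ} (hk : 0 < k) (q c : X → Fin k → ℝ) (lam : ℝ) :
    Set (X → Fin k → ℝ) :=
  {s | IsRoutingStrategy s ∧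
    ∀ x i, q x i - lam * c x i < finMax hk (fun j => q x j - lam * c x j) → s x i = 0}

/-- Lemma A.2: for `λ₁ < λ₂`, `s¹ ∈ S_λ₁` and `s² ∈ S_λ₂`, the expected cost of `s¹`
is at least that of `s²`; in fact the cost inequality holds pointwise for every query. -/
theorem cost_monotone_expected {X : Type*} [MeasurableSpace X]
    (μ : Measure X) [IsProbabilityMeasure μ]
    (k : ℕ) (hk : 0 < k) (q c : X → Fin k → ℝ)
    (hq : ∀ i, Measurable fun x => q x i) (hc : ∀ i, Measurable fun x => c x i)
    (lam₁ lam₂ : ℝ) (hlt : lam₁ < lam₂)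
    (s₁ s₂ : X → Fin k → ℝ)
    (hs₁ : s₁ ∈ Sset hk q c lam₁) (hs₂ : s₂ ∈ Sset hk q c lam₂)
    (hint₁ : Integrable (fun x => ∑ i, s₁ x i * c x i) μ)
    (hint₂ : Integrable (fun x => ∑ i, s₂ x i * c x i) μ) :
    (∫ x, (∑ i, s₂ x i * c x i) ∂μ) ≤ ∫ x, (∑ i, s₁ x i * c x i) ∂μ ∧
    ∀ x, (∑ i, s₂ x i * c x i) ≤ ∑ i, s₁ x i * c x i := by
  -- generic bound: any prob dist gives weighted average ≤ max
  have hle : ∀ (w f : Fin k → ℝ), (∀ i, 0 ≤ w i) → ∑ i, w i = 1 →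
      ∑ i, w i * f i ≤ finMax hk f := by
    intro w f hw hsum
    calc ∑ i, w i * f i ≤ ∑ i, w i * finMax hk f := by
          apply Finset.sum_le_sum
          intro i _
          exact mul_le_mul_of_nonneg_left (Finset.le_sup' f (Finset.mem_univ i)) (hw i)
      _ = finMax hk f := by rw [← Finset.sum_mul, hsum, one_mul]
  -- strategies in S_λ achieve the max
  have heq : ∀ (w f : Fin k → ℝ), (∀ i, 0 ≤ w i) → ∑ i, w i = 1 →
      (∀ i, f i < finMax hk f → w i = 0) → ∑ i, w i * f i = finMax hk f := by
    intro w f hw hsum hz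
    have : ∑ i, w i * f i = ∑ i, w i * finMax hk f := by
      apply Finset.sum_congr rfl
      intro i _
      rcases lt_or_eq_of_le (Finset.le_sup' f (Finset.mem_univ i)) with h | h
      · rw [hz i h]; ring
      · rw [h]; rfl
    rw [this, ← Finset.sum_mul, hsum, one_mul]
  have key : ∀ x, (∑ i, s₂ x i * c x i) ≤ ∑ i, s₁ x i * c x i := by
    intro x
    obtain ⟨h1w, h1m⟩ := hs₁
    obtain ⟨h2w, h2m⟩ := hs₂
    have e1 : ∑ i, s₁ x i * (q x i - lam₁ * c x i)
        = finMax hk (fun j => q x j - lam₁ * c x j) :=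
      heq _ _ (h1w x).1 (h1w x).2 (h1m x)
    have e2 : ∑ i, s₂ x i * (q x i - lam₂ * c x i)
        = finMax hk (fun j => q x j - lam₂ * c x j) :=
      heq _ _ (h2w x).1 (h2w x).2 (h2m x)
    have l1 : ∑ i, s₂ x i * (q x i - lam₁ * c x i)
        ≤ finMax hk (fun j => q x j - lam₁ * c x j) :=
      hle _ _ (h2w x).1 (h2w x).2
    have l2 : ∑ i, s₁ x i * (q x i - lam₂ * c x i)
        ≤ finMax hk (fun j => q x j - lam₂ * c x j) :=
      hle _ _ (h1w x).1 (h1w x).2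
    rw [← e1] at l1
    rw [← e2] at l2
    have expand : ∀ (w : X → Fin k → ℝ) (lam : ℝ),
        ∑ i, w x i * (q x i - lam * c x i)
        = (∑ i, w x i * q x i) - lam * ∑ i, w x i * c x i := by
      intro w lam
      rw [Finset.mul_sum, ← Finset.sum_sub_distrib]
      apply Finset.sum_congr rfl
      intro i _
      ring
    rw [expand s₂ lam₁, expand s₁ lam₁] at l1
    rw [expand s₁ lam₂, expand s₂ lam₂] at l2
    nlinarith [l1, l2, hlt]
  exact ⟨integral_mono hint₂ hint₁ key, key⟩
end

section
/- (Lemma A.3, first part.) Let X be a type, k ≥ 1, and q̂, ĉ : X → (Fin k → ℝ). Let Λ = {λ ∈ ℝ : ∃ x ∈ X, ∃ i j with i ≠ j, q̂ x i − λ·ĉ x i = q̂ x j − λ·ĉ x j} be the set of crossing points. For λ ∈ ℝ let S_λ be the set of routing strategies s (s x i ≥ 0, ∑_i s x i = 1 for all x) putting zero mass on any model i with q̂ x i − λ·ĉ x i < max_j (q̂ x j − λ·ĉ x j). If λ₁ < λ₂ and the closed interval [λ₁, λ₂] is disjoint from Λ, then S_λ₁ = S_λ₂. -/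
open Finset

/-- The set `Λ` of crossing points: levels `λ` at which two distinct models have equal
cost-quality tradeoff for some query. -/
def crossSet {X : Type*} {k : ℕ} (q c : X → Fin k → ℝ) : Set ℝ :=
  {lam | ∃ x : X, ∃ i j : Fin k, i ≠ j ∧
    q x i - lam * c x i = q x j - lam * c x j}


lemma sign_const {g : ℝ → ℝ} (hg : Continuous g) {a b : ℝ} (hab : a ≤ b)
    (h : ∀ t ∈ Set.Icc a b, g t ≠ 0) : (g a < 0 ↔ g b < 0) := by
  constructor
  · intro ha
    by_contra hb
    push_neg at hb
    have : (0:ℝ) ∈ g '' Set.Icc a b :=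
      intermediate_value_Icc hab hg.continuousOn ⟨ha.le, hb⟩
    obtain ⟨t, ht, ht0⟩ := this
    exact h t ht ht0
  · intro hb
    by_contra ha
    push_neg at ha
    have : (0:ℝ) ∈ g '' Set.Icc a b :=
      intermediate_value_Icc' hab hg.continuousOn ⟨hb.le, ha⟩
    obtain ⟨t, ht, ht0⟩ := this
    exact h t ht ht0

/-- Lemma A.3, first part: if `[λ₁, λ₂]` contains no crossing point, then `S_λ₁ = S_λ₂`. -/
theorem Sset_eq_of_no_crossing {X : Type*} (k : ℕ) (hk : 0 < k)
    (q c : X → Fin k → ℝ) (lam₁ lam₂ : ℝ) (hlt : lam₁ < lam₂)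
    (hdisj : Set.Icc lam₁ lam₂ ∩ crossSet q c = ∅) :
    Sset hk q c lam₁ = Sset hk q c lam₂ := by
  have hne : (Finset.univ : Finset (Fin k)).Nonempty := Finset.univ_nonempty_iff.mpr ⟨⟨0, hk⟩⟩
  -- key: strict comparison between two models is the same at lam₁ and lam₂
  have key : ∀ (x : X) (i j : Fin k),
      (q x i - lam₁ * c x i < q x j - lam₁ * c x j ↔
       q x i - lam₂ * c x i < q x j - lam₂ * c x j) := by
    intro x i j
    by_cases hij : i = j
    · subst hij; simp
    have hcont : Continuous (fun t : ℝ => (q x i - t * c x i) - (q x j - t * c x j)) := by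
      continuity
    have hnz : ∀ t ∈ Set.Icc lam₁ lam₂,
        (q x i - t * c x i) - (q x j - t * c x j) ≠ 0 := by
      intro t ht h0
      have : t ∈ Set.Icc lam₁ lam₂ ∩ crossSet q c :=
        ⟨ht, ⟨x, i, j, hij, by linarith⟩⟩
      rw [hdisj] at this
      exact this
    have := sign_const hcont hlt.le hnz
    constructor
    · intro h; have := this.mp (by linarith); linarith
    · intro h; have := this.mpr (by linarith); linarith
  ext s
  constructor
  · rintro ⟨hs, hmax⟩
    refine ⟨hs, fun x i hlt2 => ?_⟩
    obtain ⟨j, _, hj⟩ := Finset.exists_mem_eq_sup' hne (fun j => q x j - lam₁ * c x j)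
    have hj1 : q x j - lam₁ * c x j = finMax hk (fun j => q x j - lam₁ * c x j) := hj.symm
    -- show i loses to j at lam₂
    have hjle : q x j - lam₂ * c x j ≤ finMax hk (fun j => q x j - lam₂ * c x j) :=
      by unfold finMax; exact Finset.le_sup' (fun j => q x j - lam₂ * c x j) (Finset.mem_univ j)
    by_cases hlt1 : q x i - lam₂ * c x i < q x j - lam₂ * c x j
    · have : q x i - lam₁ * c x i < q x j - lam₁ * c x j := (key x i j).mpr hlt1
      exact hmax x i (by rw [← hj1]; exact this)
    · push_neg at hlt1
      -- then j also loses at lam₂, get actual maximizer at lam₂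
      obtain ⟨m, _, hm⟩ := Finset.exists_mem_eq_sup' hne (fun j => q x j - lam₂ * c x j)
      have : q x i - lam₂ * c x i < q x m - lam₂ * c x m := by
        rw [show finMax hk (fun j => q x j - lam₂ * c x j) = q x m - lam₂ * c x m from hm] at hlt2
        exact hlt2
      have h1 : q x i - lam₁ * c x i < q x m - lam₁ * c x m := (key x i m).mpr this
      have hmle : q x m - lam₁ * c x m ≤ finMax hk (fun j => q x j - lam₁ * c x j) :=
        by unfold finMax; exact Finset.le_sup' (fun j => q x j - lam₁ * c x j) (Finset.mem_univ m)
      exact hmax x i (lt_of_lt_of_le h1 hmle)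
  · rintro ⟨hs, hmax⟩
    refine ⟨hs, fun x i hlt2 => ?_⟩
    obtain ⟨m, _, hm⟩ := Finset.exists_mem_eq_sup' hne (fun j => q x j - lam₁ * c x j)
    have : q x i - lam₁ * c x i < q x m - lam₁ * c x m := by
      rw [show finMax hk (fun j => q x j - lam₁ * c x j) = q x m - lam₁ * c x m from hm] at hlt2
      exact hlt2
    have h2 : q x i - lam₂ * c x i < q x m - lam₂ * c x m := (key x i m).mp this
    have hmle : q x m - lam₂ * c x m ≤ finMax hk (fun j => q x j - lam₂ * c x j) :=
      by unfold finMax; exact Finset.le_sup' (fun j => q x j - lam₂ * c x j) (Finset.mem_univ m)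
    exact hmax x i (lt_of_lt_of_le h2 hmle)
end

section
/- (Lemma A.3, second part.) Let X be a type, k ≥ 1, and q̂, ĉ : X → (Fin k → ℝ). Let Λ = {λ ∈ ℝ : ∃ x ∈ X, ∃ i j with i ≠ j, q̂ x i − λ·ĉ x i = q̂ x j − λ·ĉ x j}, and for λ ∈ ℝ let S_λ be the set of routing strategies s (s x i ≥ 0, ∑_i s x i = 1 for all x) putting zero mass on any model i with q̂ x i − λ·ĉ x i < max_j (q̂ x j − λ·ĉ x j). If λ₁ < λ₂, λ* ∈ [λ₁, λ₂], and [λ₁, λ₂] ∩ Λ = {λ*}, then S_λ ⊆ S_{λ*} for every λ ∈ [λ₁, λ₂]. -/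
open Finset

/-- Lemma A.3, second part: if the only crossing point in `[λ₁, λ₂]` is `λ*`, then
`S_λ ⊆ S_{λ*}` for every `λ ∈ [λ₁, λ₂]`. -/
theorem Sset_subset_of_single_crossing {X : Type*} (k : ℕ) (hk : 0 < k)
    (q c : X → Fin k → ℝ) (lam₁ lam₂ lamStar : ℝ) (hlt : lam₁ < lam₂)
    (hmem : lamStar ∈ Set.Icc lam₁ lam₂)
    (hsingle : Set.Icc lam₁ lam₂ ∩ crossSet q c = {lamStar}) :
    ∀ lam ∈ Set.Icc lam₁ lam₂, Sset hk q c lam ⊆ Sset hk q c lamStar := by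
  intro lam hlam s hs
  obtain ⟨hstrat, hzero⟩ := hs
  refine ⟨hstrat, ?_⟩
  intro x i hlt'
  by_contra hne
  have hmax : finMax hk (fun j => q x j - lam * c x j) ≤ q x i - lam * c x i := by
    by_contra h
    exact hne (hzero x i (lt_of_not_ge h))
  obtain ⟨j, -, hj⟩ := Finset.exists_mem_eq_sup'
    (Finset.univ_nonempty_iff.mpr ⟨(⟨0, hk⟩ : Fin k)⟩) (fun j => q x j - lamStar * c x j)
  have hstar : q x i - lamStar * c x i < q x j - lamStar * c x j := by
    have := hlt'
    rw [finMax, hj] at this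
    exact this
  have hlamj : q x j - lam * c x j ≤ q x i - lam * c x i :=
    le_trans (Finset.le_sup' (f := fun j => q x j - lam * c x j) (Finset.mem_univ j)) hmax
  set g : ℝ → ℝ := fun t => (q x i - q x j) - t * (c x i - c x j) with hg
  have hgs : g lamStar < 0 := by simp only [hg]; nlinarith
  have hgl : 0 ≤ g lam := by simp only [hg]; nlinarith
  have hij : i ≠ j := by
    rintro rfl
    simp [hg] at hgs
  have hcont : ContinuousOn g (Set.uIcc lamStar lam) := by
    apply Continuous.continuousOn; continuity
  have h0 : (0:ℝ) ∈ Set.uIcc (g lamStar) (g lam) :=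
    Set.mem_uIcc.mpr (Or.inl ⟨le_of_lt hgs, hgl⟩)
  obtain ⟨μ, hμmem, hμ0⟩ := intermediate_value_uIcc hcont h0
  have hμIcc : μ ∈ Set.Icc lam₁ lam₂ := by
    have : Set.uIcc lamStar lam ⊆ Set.Icc lam₁ lam₂ := Set.uIcc_subset_Icc hmem hlam
    exact this hμmem
  have hμcross : μ ∈ crossSet q c := by
    refine ⟨x, i, j, hij, ?_⟩
    simp only [hg] at hμ0
    linarith
  have : μ = lamStar := by
    have : μ ∈ ({lamStar} : Set ℝ) := hsingle ▸ ⟨hμIcc, hμcross⟩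
    exact this
  rw [this] at hμ0
  linarith
end

section
/- (Theorem 3.1 / Theorem A.1, optimality of budget-exact strategies in S_λ.) Let X be a measurable space with probability measure μ, k ≥ 1, and q̂, ĉ : X → (Fin k → ℝ). For λ ∈ ℝ let S_λ be the set of routing strategies s (s x i ≥ 0, ∑_i s x i = 1 for all x) putting zero mass on any model i with q̂ x i − λ·ĉ x i < max_j (q̂ x j − λ·ĉ x j). Fix λ ≥ 0 and s ∈ S_λ such that x ↦ ∑_i s x i · ĉ x i and x ↦ ∑_i s x i · q̂ x i are integrable, and let B = ∫ (∑_i s x i · ĉ x i) dμ. Then for every routing strategy s' such that x ↦ ∑_i s' x i · ĉ x i and x ↦ ∑_i s' x i · q̂ x i are integrable and ∫ (∑_i s' x i · ĉ x i) dμ ≤ B, one has ∫ (∑_i s' x i · q̂ x i) dμ ≤ ∫ (∑_i s x i · q̂ x i) dμ. In particular, any routing strategy in ⋃_{λ ≥ 0} S_λ with expected cost exactly B achieves the optimal expected quality among all routing strategies with expected cost at most B. -/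
open Finset MeasureTheory

lemma wsum_le_finMax {k : ℕ} (hk : 0 < k) (w f : Fin k → ℝ)
    (hw : ∀ i, 0 ≤ w i) (hsum : ∑ i, w i = 1) :
    ∑ i, w i * f i ≤ finMax hk f := by
  calc ∑ i, w i * f i ≤ ∑ i, w i * finMax hk f :=
        Finset.sum_le_sum fun i _ =>
          mul_le_mul_of_nonneg_left (Finset.le_sup' f (Finset.mem_univ i)) (hw i)
    _ = finMax hk f := by rw [← Finset.sum_mul, hsum, one_mul]

lemma wsum_eq_finMax {k : ℕ} (hk : 0 < k) (w f : Fin k → ℝ)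
    (hw : ∀ i, 0 ≤ w i) (hsum : ∑ i, w i = 1)
    (hz : ∀ i, f i < finMax hk f → w i = 0) :
    ∑ i, w i * f i = finMax hk f := by
  have : ∀ i ∈ Finset.univ, w i * f i = w i * finMax hk f := by
    intro i _
    rcases lt_or_eq_of_le (Finset.le_sup' f (Finset.mem_univ i)) with h | h
    · rw [hz i h]; ring
    · rw [h]; rfl
  rw [Finset.sum_congr rfl this, ← Finset.sum_mul, hsum, one_mul]

/-- Theorem 3.1 / A.1: a routing strategy `s ∈ S_λ` (for some `λ ≥ 0`) with expected cost `B`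
achieves the optimal expected quality among all routing strategies with expected cost at
most `B`. -/
theorem optimal_routing {X : Type*} [MeasurableSpace X]
    (μ : Measure X) [IsProbabilityMeasure μ]
    (k : ℕ) (hk : 0 < k) (q c : X → Fin k → ℝ)
    (lam : ℝ) (hlam : 0 ≤ lam)
    (s : X → Fin k → ℝ) (hs : s ∈ Sset hk q c lam)
    (hsc : Integrable (fun x => ∑ i, s x i * c x i) μ)
    (hsq : Integrable (fun x => ∑ i, s x i * q x i) μ)
    (s' : X → Fin k → ℝ) (hs' : IsRoutingStrategy s')
    (hs'c : Integrable (fun x => ∑ i, s' x i * c x i) μ)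
    (hs'q : Integrable (fun x => ∑ i, s' x i * q x i) μ)
    (hbudget : (∫ x, (∑ i, s' x i * c x i) ∂μ) ≤ ∫ x, (∑ i, s x i * c x i) ∂μ) :
    (∫ x, (∑ i, s' x i * q x i) ∂μ) ≤ ∫ x, (∑ i, s x i * q x i) ∂μ := by
  obtain ⟨hsR, hszero⟩ := hs
  -- pointwise inequality
  have hpt : ∀ x, (∑ i, s' x i * q x i) - lam * (∑ i, s' x i * c x i)
      ≤ (∑ i, s x i * q x i) - lam * (∑ i, s x i * c x i) := by
    intro x
    have h1 : (∑ i, s' x i * q x i) - lam * (∑ i, s' x i * c x i)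
        = ∑ i, s' x i * (q x i - lam * c x i) := by
      rw [Finset.mul_sum, ← Finset.sum_sub_distrib]
      exact Finset.sum_congr rfl fun i _ => by ring
    have h2 : (∑ i, s x i * q x i) - lam * (∑ i, s x i * c x i)
        = ∑ i, s x i * (q x i - lam * c x i) := by
      rw [Finset.mul_sum, ← Finset.sum_sub_distrib]
      exact Finset.sum_congr rfl fun i _ => by ring
    rw [h1, h2,
      wsum_eq_finMax hk (s x) (fun i => q x i - lam * c x i) (hsR x).1 (hsR x).2
        (hszero x)]
    exact wsum_le_finMax hk (s' x) (fun i => q x i - lam * c x i) (hs' x).1 (hs' x).2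
  have hint :
      (∫ x, (∑ i, s' x i * q x i) ∂μ) - lam * (∫ x, (∑ i, s' x i * c x i) ∂μ)
      ≤ (∫ x, (∑ i, s x i * q x i) ∂μ) - lam * (∫ x, (∑ i, s x i * c x i) ∂μ) := by
    have h := integral_mono (hs'q.sub (hs'c.const_mul lam)) (hsq.sub (hsc.const_mul lam))
      hpt
    simp only [Pi.sub_apply] at h
    rwa [integral_sub hs'q (hs'c.const_mul lam), integral_sub hsq (hsc.const_mul lam),
      integral_const_mul, integral_const_mul] at h
  nlinarith [mul_le_mul_of_nonneg_left hbudget hlam]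
end

section
/- (Per-step optimality underlying the optimal cascading strategy, Theorem 4.2.) Let X be a measurable space with probability measure μ, k ≥ 1, q̂, ĉ : X → (Fin k → ℝ), and let w : X → ℝ be a nonnegative weight function (the probability that the cascade reaches the current step on query x). Fix λ ≥ 0 and a routing strategy s (s x i ≥ 0, ∑_i s x i = 1 for all x) such that for every x and i, if q̂ x i − λ·ĉ x i < max_j (q̂ x j − λ·ĉ x j) then s x i = 0. Assume x ↦ w x · ∑_i s x i · ĉ x i and x ↦ w x · ∑_i s x i · q̂ x i are integrable, and let B = ∫ w x · (∑_i s x i · ĉ x i) dμ. Then every routing strategy s' with x ↦ w x · ∑_i s' x i · ĉ x i and x ↦ w x · ∑_i s' x i · q̂ x i integrable and ∫ w x · (∑_i s' x i · ĉ x i) dμ ≤ B satisfies ∫ w x · (∑_i s' x i · q̂ x i) dμ ≤ ∫ w x · (∑_i s x i · q̂ x i) dμ. -/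
open Finset MeasureTheory

lemma strategy_le_max {k : ℕ} (hk : 0 < k) (f : Fin k → ℝ) (p : Fin k → ℝ)
    (hp : ∀ i, 0 ≤ p i) (hp1 : ∑ i, p i = 1) :
    ∑ i, p i * f i ≤ finMax hk f := by
  calc ∑ i, p i * f i ≤ ∑ i, p i * finMax hk f := by
        apply Finset.sum_le_sum
        intro i _
        exact mul_le_mul_of_nonneg_left (Finset.le_sup' f (Finset.mem_univ i)) (hp i)
    _ = finMax hk f := by rw [← Finset.sum_mul, hp1, one_mul]

lemma strategy_eq_max {k : ℕ} (hk : 0 < k) (f : Fin k → ℝ) (p : Fin k → ℝ)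
    (hp : ∀ i, 0 ≤ p i) (hp1 : ∑ i, p i = 1)
    (hsupp : ∀ i, f i < finMax hk f → p i = 0) :
    ∑ i, p i * f i = finMax hk f := by
  have : ∑ i, p i * f i = ∑ i, p i * finMax hk f := by
    apply Finset.sum_congr rfl
    intro i _
    rcases lt_or_eq_of_le (Finset.le_sup' f (Finset.mem_univ i) : f i ≤ finMax hk f) with h | h
    · rw [hsupp i h]; ring
    · rw [h]; rfl
  rw [this, ← Finset.sum_mul, hp1, one_mul]

/-- Per-step optimality underlying the optimal cascading strategy (Theorem 4.2): with a
nonnegative weight `w x` (the probability that the cascade reaches the current step on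
query `x`), a routing strategy supported on the argmax of `q̂ x i - λ * ĉ x i` with
`w`-weighted expected cost `B` achieves the optimal `w`-weighted expected quality among all
routing strategies of `w`-weighted expected cost at most `B`. -/
theorem cascading_step_optimal {X : Type*} [MeasurableSpace X]
    (μ : Measure X) [IsProbabilityMeasure μ]
    (k : ℕ) (hk : 0 < k) (q c : X → Fin k → ℝ)
    (w : X → ℝ) (hw : ∀ x, 0 ≤ w x)
    (lam : ℝ) (hlam : 0 ≤ lam)
    (s : X → Fin k → ℝ) (hs : IsRoutingStrategy s)
    (hsupp : ∀ x i,
      q x i - lam * c x i < finMax hk (fun j => q x j - lam * c x j) → s x i = 0)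
    (hsc : Integrable (fun x => w x * ∑ i, s x i * c x i) μ)
    (hsq : Integrable (fun x => w x * ∑ i, s x i * q x i) μ)
    (s' : X → Fin k → ℝ) (hs' : IsRoutingStrategy s')
    (hs'c : Integrable (fun x => w x * ∑ i, s' x i * c x i) μ)
    (hs'q : Integrable (fun x => w x * ∑ i, s' x i * q x i) μ)
    (hbudget : (∫ x, w x * (∑ i, s' x i * c x i) ∂μ) ≤
      ∫ x, w x * (∑ i, s x i * c x i) ∂μ) :
    (∫ x, w x * (∑ i, s' x i * q x i) ∂μ) ≤ ∫ x, w x * (∑ i, s x i * q x i) ∂μ := by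
  -- pointwise: w x * ∑ s' (q - λc) ≤ w x * ∑ s (q - λc)
  have key : ∀ x, w x * (∑ i, s' x i * q x i) - lam * (w x * (∑ i, s' x i * c x i)) ≤
      w x * (∑ i, s x i * q x i) - lam * (w x * (∑ i, s x i * c x i)) := by
    intro x
    have h1 : ∑ i, s' x i * (q x i - lam * c x i) ≤
        finMax hk (fun j => q x j - lam * c x j) :=
      strategy_le_max hk _ _ (hs' x).1 (hs' x).2
    have h2 : ∑ i, s x i * (q x i - lam * c x i) =
        finMax hk (fun j => q x j - lam * c x j) :=
      strategy_eq_max hk _ _ (hs x).1 (hs x).2 (hsupp x)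
    have h3 : ∑ i, s' x i * (q x i - lam * c x i) ≤
        ∑ i, s x i * (q x i - lam * c x i) := h2 ▸ h1
    have h4 := mul_le_mul_of_nonneg_left h3 (hw x)
    have e : ∀ (t : X → Fin k → ℝ), w x * ∑ i, t x i * (q x i - lam * c x i) =
        w x * (∑ i, t x i * q x i) - lam * (w x * (∑ i, t x i * c x i)) := by
      intro t
      rw [show (∑ i, t x i * (q x i - lam * c x i)) =
        (∑ i, t x i * q x i) - lam * ∑ i, t x i * c x i by
          rw [Finset.mul_sum, ← Finset.sum_sub_distrib]; apply Finset.sum_congr rfl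
          intros; ring]
      ring
    rw [e s', e s] at h4
    exact h4
  have hint : (∫ x, (w x * (∑ i, s' x i * q x i) - lam * (w x * (∑ i, s' x i * c x i))) ∂μ) ≤
      ∫ x, (w x * (∑ i, s x i * q x i) - lam * (w x * (∑ i, s x i * c x i))) ∂μ :=
    integral_mono (hs'q.sub (hs'c.const_mul lam)) (hsq.sub (hsc.const_mul lam)) key
  rw [integral_sub hs'q (hs'c.const_mul lam), integral_sub hsq (hsc.const_mul lam),
    integral_const_mul, integral_const_mul] at hint
  nlinarith [mul_le_mul_of_nonneg_left hbudget hlam]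
end

section
/- (Lemma 5.3, negative marginal gain prunes supersets.) Let (Ω, 𝒜, P) be a probability space, k ≥ 1, Q₁, …, Q_k integrable real random variables on Ω, c : {1, …, k} → ℝ a cost assignment, and λ ≥ 0. For each nonempty subset M of {1, …, k}, define the cost-quality tradeoff τ(M) = E[max_{i ∈ M} Q_i] − λ · ∑_{i ∈ M} c i. Suppose m ∈ M, the set M \ {m} is nonempty, and the marginal gain of m with respect to M is strictly negative, i.e., τ(M) − τ(M \ {m}) < 0. Then for every set M' with M ⊆ M' ⊆ {1, …, k}, one has τ(M') < τ(M' \ {m}); in particular, M' never attains the maximal tradeoff among nonempty subsets of {1, …, k}, since removing m strictly improves it. -/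
open Finset MeasureTheory

/-- The cost-quality tradeoff of a (nonempty) supermodel `M` at level `λ`: the expected
maximum quality among the models in `M`, minus `λ` times the total cost of `M`. -/
noncomputable def tradeoff {Ω : Type*} [MeasurableSpace Ω] (P : Measure Ω) {k : ℕ}
    (Q : Fin k → Ω → ℝ) (c : Fin k → ℝ) (lam : ℝ)
    (M : Finset (Fin k)) (hM : M.Nonempty) : ℝ :=
  (∫ ω, M.sup' hM (fun i => Q i ω) ∂P) - lam * ∑ i ∈ M, c i

private lemma integrable_sup' {Ω : Type*} [MeasurableSpace Ω] (P : Measure Ω) {k : ℕ}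
    (Q : Fin k → Ω → ℝ) (hQ : ∀ i, Integrable (Q i) P)
    (M : Finset (Fin k)) (hM : M.Nonempty) :
    Integrable (fun ω => M.sup' hM (fun i => Q i ω)) P := by
  induction hM using Finset.Nonempty.cons_induction with
  | singleton i => simpa using hQ i
  | cons i s his hs ih =>
      simp only [Finset.sup'_cons hs]
      exact (hQ i).sup ih

/-- Lemma 5.3: if the marginal gain of a model `m ∈ M` with respect to the supermodel `M` is
strictly negative, then for every supermodel `M'` containing `M`, removing `m` strictly
improves the tradeoff; in particular, `M'` never attains the maximal tradeoff among nonempty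
supermodels. -/
theorem negative_marginal_gain {Ω : Type*} [MeasurableSpace Ω]
    (P : Measure Ω) [IsProbabilityMeasure P]
    (k : ℕ) (hk : 0 < k) (Q : Fin k → Ω → ℝ) (hQ : ∀ i, Integrable (Q i) P)
    (c : Fin k → ℝ) (lam : ℝ) (hlam : 0 ≤ lam)
    (M : Finset (Fin k)) (m : Fin k) (hm : m ∈ M)
    (hMm : (M.erase m).Nonempty)
    (hneg : tradeoff P Q c lam M ⟨m, hm⟩ - tradeoff P Q c lam (M.erase m) hMm < 0) :
    ∀ (M' : Finset (Fin k)) (hMM' : M ⊆ M'),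
      (tradeoff P Q c lam M' ⟨m, hMM' hm⟩ <
        tradeoff P Q c lam (M'.erase m) (hMm.mono (Finset.erase_subset_erase m hMM'))) ∧
      ¬ ∀ (N : Finset (Fin k)) (hN : N.Nonempty),
          tradeoff P Q c lam N hN ≤ tradeoff P Q c lam M' ⟨m, hMM' hm⟩ := by
  intro M' hMM'
  have hm' : m ∈ M' := hMM' hm
  have hM'm : (M'.erase m).Nonempty := hMm.mono (Finset.erase_subset_erase m hMM')
  have key : tradeoff P Q c lam M' ⟨m, hm'⟩ <
      tradeoff P Q c lam (M'.erase m) hM'm := by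
    -- pointwise inequality
    have hsub : M.erase m ⊆ M'.erase m := Finset.erase_subset_erase m hMM'
    have hpt : ∀ ω, M'.sup' ⟨m, hm'⟩ (fun i => Q i ω) -
        (M'.erase m).sup' hM'm (fun i => Q i ω) ≤
        M.sup' ⟨m, hm⟩ (fun i => Q i ω) -
        (M.erase m).sup' hMm (fun i => Q i ω) := by
      intro ω
      set a : ℝ := (M.erase m).sup' hMm (fun i => Q i ω) with ha
      set a' : ℝ := (M'.erase m).sup' hM'm (fun i => Q i ω) with ha'
      have haa' : a ≤ a' := Finset.sup'_mono _ hsub hMm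
      have h1 : M'.sup' ⟨m, hm'⟩ (fun i => Q i ω) ≤ Q m ω ⊔ a' := by
        apply Finset.sup'_le
        intro i hi
        rcases eq_or_ne i m with rfl | hne
        · exact le_sup_left
        · exact le_sup_of_le_right (Finset.le_sup' (fun i => Q i ω) (Finset.mem_erase.mpr ⟨hne, hi⟩))
      have h2 : Q m ω ≤ M.sup' ⟨m, hm⟩ (fun i => Q i ω) := Finset.le_sup' (fun i => Q i ω) hm
      have h3 : a ≤ M.sup' ⟨m, hm⟩ (fun i => Q i ω) :=
        Finset.sup'_mono _ (Finset.erase_subset m M) hMm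
      have hl : Q m ω ≤ Q m ω ⊔ a := le_sup_left
      have hr : a ≤ Q m ω ⊔ a := le_sup_right
      have h4 : Q m ω ⊔ a' ≤ (Q m ω ⊔ a) + (a' - a) :=
        sup_le (by linarith) (by linarith)
      have h5 : Q m ω ⊔ a ≤ M.sup' ⟨m, hm⟩ (fun i => Q i ω) := sup_le h2 h3
      linarith
    have hIM := integrable_sup' P Q hQ M ⟨m, hm⟩
    have hIMe := integrable_sup' P Q hQ (M.erase m) hMm
    have hIM' := integrable_sup' P Q hQ M' ⟨m, hm'⟩
    have hIM'e := integrable_sup' P Q hQ (M'.erase m) hM'm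
    have hint : (∫ ω, M'.sup' ⟨m, hm'⟩ (fun i => Q i ω) ∂P) -
        (∫ ω, (M'.erase m).sup' hM'm (fun i => Q i ω) ∂P) ≤
        (∫ ω, M.sup' ⟨m, hm⟩ (fun i => Q i ω) ∂P) -
        (∫ ω, (M.erase m).sup' hMm (fun i => Q i ω) ∂P) := by
      rw [← integral_sub hIM' hIM'e, ← integral_sub hIM hIMe]
      exact integral_mono (hIM'.sub hIM'e) (hIM.sub hIMe) hpt
    have hsum : ∀ (S : Finset (Fin k)) (hmS : m ∈ S),
        ∑ i ∈ S, c i = (∑ i ∈ S.erase m, c i) + c m := by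
      intro S hmS
      rw [Finset.sum_erase_add _ _ hmS]
    have e1 := hsum M hm
    have e2 := hsum M' hm'
    simp only [tradeoff] at hneg ⊢
    rw [e2]
    rw [e1] at hneg
    nlinarith [hint]
  refine ⟨key, fun h => ?_⟩
  exact absurd (h (M'.erase m) hM'm) (not_le.mpr key)
end
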